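/- arXiv:2110.14523 — 3 statements merged into one kernel-verified Lean document; each statement's English description precedes it below -/
import Mathlib

section
/- Let A be a real symmetric positive semidefinite K×K matrix with eigenvalues λ̃₁ ≤ λ̃₂ ≤ ... ≤ λ̃_K, and let Σ = diag(ω₁,...,ω_K) with ω₁ ≥ ω₂ ≥ ... ≥ ω_K ≥ 0. Then tr(ΣA) ≥ Σ_{i=1}^K ω_i λ̃_i. -/
/-!
Writing `A = Q diag(λ) Qᵀ`, the diagonal entries of `A` are `A i i = ∑ j, Q i j ^ 2 * λ j`, and the
squared entries of an orthogonal matrix form a doubly stochastic matrix `P`. So `tr(ΣA) = ωᵀ P λ`.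
This is linear in `P`, and by Birkhoff's theorem `P` is a convex combination of permutation
matrices, for which `ωᵀ P λ = ∑ i, ω i * λ (σ i)` is bounded below by `∑ i, ω i * λ i` by the
rearrangement inequality, since `ω` and `λ` are oppositely ordered.
-/

open Matrix

namespace Matrix

variable {R m n : Type*} [Fintype n] [DecidableEq n]

theorem diag_mul_diagonal_mul_transpose [CommSemiring R] (Q : Matrix m n R) (d : n → R) :
    diag (Q * diagonal d * Qᵀ) = (Q ⊙ Q) *ᵥ d := by
  ext i
  rw [diag_apply, mul_apply]
  simp only [mul_diagonal, transpose_apply, mulVec, dotProduct, hadamard_apply]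
  exact Finset.sum_congr rfl fun j _ => by ring

theorem trace_diagonal_mul [NonUnitalNonAssocSemiring R] (w : n → R) (A : Matrix n n R) :
    (diagonal w * A).trace = w ⬝ᵥ diag A := by
  simp [trace, dotProduct]

theorem eq_mul_diagonal_mul_transpose_of_transpose_mul_self [CommRing R] {A Q : Matrix n n R}
    {d : n → R} (hQ : Qᵀ * Q = 1) (hdiag : Qᵀ * A * Q = diagonal d) :
    A = Q * diagonal d * Qᵀ := by
  have hQ' : Q * Qᵀ = 1 := mul_eq_one_comm.mp hQ
  rw [← hdiag, Matrix.mul_assoc, Matrix.mul_assoc, hQ', Matrix.mul_one, ← Matrix.mul_assoc, hQ',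
    Matrix.one_mul]

theorem hadamard_self_mem_doublyStochastic_of_transpose_mul_self [CommRing R] [LinearOrder R]
    [IsStrictOrderedRing R] {Q : Matrix n n R} (hQ : Qᵀ * Q = 1) :
    Q ⊙ Q ∈ doublyStochastic R n := by
  have hQ' : Q * Qᵀ = 1 := mul_eq_one_comm.mp hQ
  refine mem_doublyStochastic_iff_sum.mpr
    ⟨fun i j => mul_self_nonneg (Q i j), fun i => ?_, fun j => ?_⟩
  · simpa [mul_apply] using congr_fun₂ hQ' i i
  · simpa [mul_apply] using congr_fun₂ hQ j j

end Matrix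

theorem Antivary.sum_mul_le_dotProduct_mulVec {R n : Type*} [Fintype n] [DecidableEq n] [Field R]
    [LinearOrder R] [IsStrictOrderedRing R] {f g : n → R} (hfg : Antivary f g)
    {M : Matrix n n R} (hM : M ∈ doublyStochastic R n) :
    ∑ i, f i * g i ≤ f ⬝ᵥ (M *ᵥ g) := by
  have hlin : IsLinearMap R fun M : Matrix n n R => f ⬝ᵥ (M *ᵥ g) :=
    ⟨fun M N => by simp [add_mulVec], fun c M => by simp [smul_mulVec]⟩
  rw [← SetLike.mem_coe, doublyStochastic_eq_convexHull_permMatrix] at hM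
  refine convexHull_min ?_ (convex_halfSpace_ge hlin _) hM
  rintro _ ⟨σ, rfl⟩
  simpa [permMatrix_mulVec, dotProduct] using hfg.sum_mul_le_sum_mul_comp_perm (σ := σ)

theorem stmt_0_general (K : ℕ) (A : Matrix (Fin K) (Fin K) ℝ)
    (ω lam : Fin K → ℝ) (hω : Antitone ω)
    (hlam : Monotone lam)
    (Q : Matrix (Fin K) (Fin K) ℝ) (hQ : Qᵀ * Q = 1)
    (hdiag : Qᵀ * A * Q = Matrix.diagonal lam) :
    ∑ i, ω i * lam i ≤ (Matrix.diagonal ω * A).trace := by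
  rw [trace_diagonal_mul, eq_mul_diagonal_mul_transpose_of_transpose_mul_self hQ hdiag,
    diag_mul_diagonal_mul_transpose]
  exact (hω.antivary hlam).sum_mul_le_dotProduct_mulVec
    (hadamard_self_mem_doublyStochastic_of_transpose_mul_self hQ)

/-- Ruhe's trace inequality for a diagonal matrix of decreasing nonnegative weights:
if `A` is symmetric positive semidefinite with eigenvalues `lam` in nondecreasing order
(witnessed by an orthogonal diagonalization), and `ω` is nonincreasing and nonnegative,
then `tr(diag(ω) * A) ≥ ∑ i, ω i * lam i`. -/
theorem stmt_0 (K : ℕ) (A : Matrix (Fin K) (Fin K) ℝ) (hA : A.PosSemidef)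
    (ω lam : Fin K → ℝ) (hω : Antitone ω) (hω0 : ∀ i, 0 ≤ ω i)
    (hlam : Monotone lam)
    (Q : Matrix (Fin K) (Fin K) ℝ) (hQ : Qᵀ * Q = 1)
    (hdiag : Qᵀ * A * Q = Matrix.diagonal lam) :
    ∑ i, ω i * lam i ≤ (Matrix.diagonal ω * A).trace :=
  stmt_0_general K A ω lam hω hlam Q hQ hdiag
end

section
/- Let H be a real Hilbert space, B a positive semidefinite symmetric bilinear form (possibly taking value +∞ outside a subspace), and suppose the min-max values λ_k := inf over k-dimensional subspaces H_k of H of sup over unit vectors f ∈ H_k of B(f,f) are attained by an orthonormal family (φ_i)_{i≥1} with B(φ_i,φ_j) = λ_i δ_{ij}. Let ω₁ > ω₂ > ... > ω_K > 0. Then the minimum of Σ_{i=1}^K ω_i B(f_i,f_i) over all orthonormal K-tuples (f₁,...,f_K) in H equals Σ_{i=1}^K ω_i λ_i, and it is attained at f_i = φ_i. -/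
/-!
Write `λ_k` for the min-max values. For an orthonormal `f₁, …, f_n`, diagonalising the Gram
matrix of `B` on `span {f_i}` gives a `B`-orthogonal orthonormal basis `w₁, …, w_n` of that span
with `B(w₁,w₁) ≤ … ≤ B(w_n,w_n)` and the same trace. Testing the min-max definition on
`span {w₁, …, w_k}` gives `λ_k ≤ B(w_k,w_k)`, hence the Ky Fan inequality
`∑_{i ≤ n} λ_i ≤ ∑_{i ≤ n} B(f_i,f_i)` for every `n ≤ K`. Abel summation turns these partial-sum
inequalities into the weighted one, because the weights are decreasing and positive.
-/

open Finset Matrix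

theorem Fin.sum_mul_nonneg_of_antitone {K : ℕ} (ω d : Fin K → ℝ) (hω : Antitone ω)
    (hω₀ : ∀ i, 0 ≤ ω i) (hd : ∀ n (hn : n ≤ K), 0 ≤ ∑ i : Fin n, d (Fin.castLE hn i)) :
    0 ≤ ∑ i, ω i * d i := by
  induction K with
  | zero => simp
  | succ K ih =>
    set ω' : Fin K → ℝ := fun i => ω i.castSucc - ω (Fin.last K)
    have hsplit : ∑ i, ω i * d i
        = ∑ i : Fin K, ω' i * d i.castSucc + ω (Fin.last K) * ∑ i, d i := by
      simp only [ω', Fin.sum_univ_castSucc, sub_mul, sum_sub_distrib, mul_add, mul_sum]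
      ring
    have hrest : 0 ≤ ∑ i : Fin K, ω' i * d i.castSucc :=
      ih ω' (d ∘ Fin.castSucc) (fun i j hij => sub_le_sub_right (hω (by simpa using hij)) _)
        (fun i => sub_nonneg.mpr (hω (Fin.castSucc_lt_last i).le))
        (fun n hn => hd n (hn.trans K.le_succ))
    have htotal : 0 ≤ ∑ i, d i := by simpa using hd (K + 1) le_rfl
    rw [hsplit]
    exact add_nonneg hrest (mul_nonneg (hω₀ _) htotal)

namespace LinearMap.BilinForm

variable {H : Type*} [NormedAddCommGroup H] [InnerProductSpace ℝ H]

theorem apply_sum_smul_sum {ι : Type*} [Fintype ι] (B : LinearMap.BilinForm ℝ H) (x : ι → H)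
    (c e : ι → ℝ) :
    B (∑ i, c i • x i) (∑ j, e j • x j) = c ⬝ᵥ (Matrix.of (fun i j => B (x i) (x j)) *ᵥ e) := by
  simp only [map_sum, map_smul, LinearMap.sum_apply, LinearMap.smul_apply, smul_eq_mul,
    dotProduct, mulVec, Matrix.of_apply, mul_sum]
  rw [sum_comm]
  exact sum_congr rfl fun i _ => sum_congr rfl fun j _ => by ring

theorem _root_.Orthonormal.inner_sum_smul_sum {ι : Type*} [Fintype ι] {x : ι → H}
    (hx : Orthonormal ℝ x) (c e : ι → ℝ) :
    inner ℝ (∑ i, c i • x i) (∑ j, e j • x j) = c ⬝ᵥ e := by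
  simp [hx.inner_sum, dotProduct]

theorem apply_le_of_mem_span {ι : Type*} [Fintype ι] [DecidableEq ι]
    {B : LinearMap.BilinForm ℝ H} {w : ι → H} (hw : Orthonormal ℝ w)
    (hBw : ∀ i j, i ≠ j → B (w i) (w j) = 0) {c : ℝ}
    (hc : ∀ i, B (w i) (w i) ≤ c) {v : H} (hv : v ∈ Submodule.span ℝ (Set.range w))
    (hv₁ : ‖v‖ = 1) : B v v ≤ c := by
  obtain ⟨a, rfl⟩ := (Submodule.mem_span_range_iff_exists_fun ℝ).mp hv
  have hgram : Matrix.of (fun i j => B (w i) (w j)) = diagonal fun i => B (w i) (w i) := by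
    ext i j
    by_cases hij : i = j
    · simp [hij]
    · simp [hij, hBw i j hij]
  have ha : ∑ i, a i * a i = 1 := by
    rw [← dotProduct, ← hw.inner_sum_smul_sum, real_inner_self_eq_norm_sq, hv₁, one_pow]
  calc B (∑ i, a i • w i) (∑ i, a i • w i) = ∑ i, a i * a i * B (w i) (w i) := by
        simp only [apply_sum_smul_sum, hgram, dotProduct, mulVec_diagonal]
        exact sum_congr rfl fun i _ => by ring
    _ ≤ ∑ i, a i * a i * c := sum_le_sum fun i _ => by gcongr; exacts [mul_self_nonneg _, hc i]
    _ = c := by rw [← sum_mul, ha, one_mul]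

theorem exists_orthonormal_diagonalizing {ι : Type*} [Fintype ι] [DecidableEq ι]
    {B : LinearMap.BilinForm ℝ H} (hB : ∀ u v, B u v = B v u) {f : ι → H}
    (hf : Orthonormal ℝ f) :
    ∃ u : ι → H, Orthonormal ℝ u ∧ (∀ i j, i ≠ j → B (u i) (u j) = 0) ∧
      ∑ i, B (u i) (u i) = ∑ i, B (f i) (f i) := by
  set G : Matrix ι ι ℝ := Matrix.of fun i j => B (f i) (f j)
  have hG : G.IsHermitian := by
    ext i j
    simpa [G] using hB (f j) (f i)
  set V := hG.eigenvectorBasis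
  have hV : ∀ i j, V i ⬝ᵥ V j = if i = j then 1 else 0 := fun i j => by
    rw [← orthonormal_iff_ite.mp V.orthonormal i j, EuclideanSpace.inner_eq_star_dotProduct,
      dotProduct_comm]
    rfl
  refine ⟨fun j => ∑ a, V j a • f a, ?_, ?_⟩
  · rw [orthonormal_iff_ite]
    intro i j
    rw [hf.inner_sum_smul_sum, hV]
  · have hBu : ∀ i j, B (∑ a, V i a • f a) (∑ a, V j a • f a)
        = if i = j then hG.eigenvalues j else 0 := fun i j => by
      rw [apply_sum_smul_sum, hG.mulVec_eigenvectorBasis, dotProduct_smul, hV]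
      split_ifs <;> simp
    refine ⟨fun i j hij => by rw [hBu, if_neg hij], ?_⟩
    calc ∑ i, B (∑ a, V i a • f a) (∑ a, V i a • f a) = ∑ i, hG.eigenvalues i := by
          simp only [hBu, if_true]
      _ = G.trace := by simpa using hG.trace_eq_sum_eigenvalues.symm
      _ = ∑ i, B (f i) (f i) := rfl

theorem exists_orthonormal_diagonalizing_monotone {m : ℕ} {B : LinearMap.BilinForm ℝ H}
    (hB : ∀ u v, B u v = B v u) {f : Fin m → H} (hf : Orthonormal ℝ f) :
    ∃ w : Fin m → H, Orthonormal ℝ w ∧ (∀ i j, i ≠ j → B (w i) (w j) = 0) ∧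
      Monotone (fun i => B (w i) (w i)) ∧ ∑ i, B (w i) (w i) = ∑ i, B (f i) (f i) := by
  obtain ⟨u, hu, hBu, hsum⟩ := exists_orthonormal_diagonalizing hB hf
  set σ := Tuple.sort fun i => B (u i) (u i)
  refine ⟨u ∘ σ, hu.comp σ σ.injective, fun i j hij => hBu _ _ (σ.injective.ne hij),
    Tuple.monotone_sort (fun i => B (u i) (u i)), ?_⟩
  rw [← hsum]
  exact Equiv.sum_comp σ fun i => B (u i) (u i)

/-- The paper's `λ_{k+1}`: `k` is the dimension of the subspaces minus one. -/
noncomputable def minmaxValue (B : LinearMap.BilinForm ℝ H) (k : ℕ) : ℝ :=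
  sInf {x : ℝ | ∃ S : Submodule ℝ H, Module.finrank ℝ S = k + 1 ∧
    x = sSup {y : ℝ | ∃ v ∈ S, ‖v‖ = 1 ∧ y = B v v}}

theorem minmaxValue_le {B : LinearMap.BilinForm ℝ H} (hB : ∀ v, 0 ≤ B v v) {k : ℕ}
    {S : Submodule ℝ H} (hS : Module.finrank ℝ S = k + 1) {c : ℝ}
    (hc : ∀ v ∈ S, ‖v‖ = 1 → B v v ≤ c) : B.minmaxValue k ≤ c := by
  have : Nontrivial S := Module.nontrivial_of_finrank_eq_succ hS
  unfold minmaxValue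
  obtain ⟨v, hv⟩ := exists_norm_eq S zero_le_one
  have hsup : sSup {y : ℝ | ∃ v ∈ S, ‖v‖ = 1 ∧ y = B v v} ≤ c := by
    refine csSup_le ⟨_, v, v.2, hv, rfl⟩ ?_
    rintro _ ⟨w, hwS, hw₁, rfl⟩
    exact hc w hwS hw₁
  refine le_trans (csInf_le ⟨0, ?_⟩ ⟨S, hS, rfl⟩) hsup
  rintro _ ⟨S', -, rfl⟩
  exact Real.sSup_nonneg (by rintro _ ⟨w, -, -, rfl⟩; exact hB w)

theorem sum_minmaxValue_le {B : LinearMap.BilinForm ℝ H} (hBsymm : ∀ u v, B u v = B v u)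
    (hBpsd : ∀ v, 0 ≤ B v v) {m : ℕ} {f : Fin m → H} (hf : Orthonormal ℝ f) :
    ∑ i : Fin m, B.minmaxValue i ≤ ∑ i, B (f i) (f i) := by
  obtain ⟨w, hw, hBw, hmono, hsum⟩ := exists_orthonormal_diagonalizing_monotone hBsymm hf
  rw [← hsum]
  refine sum_le_sum fun k _ => ?_
  have hw' : Orthonormal ℝ (w ∘ Fin.castLE k.isLt) := hw.comp _ (Fin.castLE_injective _)
  refine minmaxValue_le hBpsd (S := Submodule.span ℝ (Set.range (w ∘ Fin.castLE k.isLt)))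
    (by rw [finrank_span_eq_card hw'.linearIndependent, Fintype.card_fin]) fun v hv hv₁ => ?_
  refine apply_le_of_mem_span hw' (fun i j hij => hBw _ _ ((Fin.castLE_injective _).ne hij))
    (fun i => hmono ?_) hv hv₁
  exact Fin.le_def.mpr (Nat.lt_succ_iff.mp i.isLt)

end LinearMap.BilinForm

theorem stmt_7_general {H : Type*} [NormedAddCommGroup H] [InnerProductSpace ℝ H]
    (B : LinearMap.BilinForm ℝ H) (hBsymm : ∀ u v, B u v = B v u)
    (hBpsd : ∀ v, 0 ≤ B v v)
    (lam : ℕ → ℝ) (φ : ℕ → H) (hφ : Orthonormal ℝ φ)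
    (hBφ : ∀ i j, B (φ i) (φ j) = if i = j then lam i else 0)
    (hminmax : ∀ k : ℕ, lam k = sInf {x : ℝ | ∃ S : Submodule ℝ H,
        Module.finrank ℝ S = k + 1 ∧
        x = sSup {y : ℝ | ∃ v ∈ S, ‖v‖ = 1 ∧ y = B v v}})
    (K : ℕ) (ω : Fin K → ℝ) (hω : StrictAnti ω) (hωpos : ∀ i, 0 < ω i) :
    IsLeast {x : ℝ | ∃ f : Fin K → H, Orthonormal ℝ f ∧
        x = ∑ i : Fin K, ω i * B (f i) (f i)}
      (∑ i : Fin K, ω i * lam (i : ℕ)) ∧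
    (∑ i : Fin K, ω i * B (φ (i : ℕ)) (φ (i : ℕ))) = ∑ i : Fin K, ω i * lam (i : ℕ) := by
  have hlam : lam = B.minmaxValue := funext hminmax
  have hattained : ∑ i : Fin K, ω i * B (φ i) (φ i) = ∑ i : Fin K, ω i * lam i := by
    simp [hBφ]
  refine ⟨⟨⟨_, hφ.comp _ Fin.val_injective, hattained.symm⟩, ?_⟩, hattained⟩
  rintro _ ⟨f, hf, rfl⟩
  have hpartial : ∀ n (hn : n ≤ K),
      0 ≤ ∑ i : Fin n, (B (f (Fin.castLE hn i)) (f (Fin.castLE hn i)) - lam (Fin.castLE hn i)) :=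
    fun n hn => by
      rw [sum_sub_distrib, sub_nonneg, hlam]
      exact LinearMap.BilinForm.sum_minmaxValue_le hBsymm hBpsd
        (hf.comp _ (Fin.castLE_injective hn))
  have := Fin.sum_mul_nonneg_of_antitone ω (fun i => B (f i) (f i) - lam i) hω.antitone
    (fun i => (hωpos i).le) hpartial
  simpa [mul_sub, sum_sub_distrib] using this

/-- Variational characterization of the first `K` eigenpairs: if the min-max values `λ_k`
of a positive semidefinite symmetric bilinear form `B` are attained by an orthonormal
family `(φ_i)` with `B(φ_i,φ_j) = λ_i δ_{ij}`, and `ω₁ > ... > ω_K > 0`, then the minimum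
of `∑ ω_i B(f_i,f_i)` over orthonormal `K`-tuples equals `∑ ω_i λ_i`, attained at `f = φ`. -/
theorem stmt_7 {H : Type*} [NormedAddCommGroup H] [InnerProductSpace ℝ H] [CompleteSpace H]
    (B : LinearMap.BilinForm ℝ H) (hBsymm : ∀ u v, B u v = B v u)
    (hBpsd : ∀ v, 0 ≤ B v v)
    (lam : ℕ → ℝ) (φ : ℕ → H) (hφ : Orthonormal ℝ φ)
    (hBφ : ∀ i j, B (φ i) (φ j) = if i = j then lam i else 0)
    (hminmax : ∀ k : ℕ, lam k = sInf {x : ℝ | ∃ S : Submodule ℝ H,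
        Module.finrank ℝ S = k + 1 ∧
        x = sSup {y : ℝ | ∃ v ∈ S, ‖v‖ = 1 ∧ y = B v v}})
    (K : ℕ) (ω : Fin K → ℝ) (hω : StrictAnti ω) (hωpos : ∀ i, 0 < ω i) :
    IsLeast {x : ℝ | ∃ f : Fin K → H, Orthonormal ℝ f ∧
        x = ∑ i : Fin K, ω i * B (f i) (f i)}
      (∑ i : Fin K, ω i * lam (i : ℕ)) ∧
    (∑ i : Fin K, ω i * B (φ (i : ℕ)) (φ (i : ℕ))) = ∑ i : Fin K, ω i * lam (i : ℕ) :=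
  stmt_7_general B hBsymm hBpsd lam φ hφ hBφ hminmax K ω hω hωpos
end

section
/- Let H be a real Hilbert space, B a positive semidefinite symmetric bilinear form on H, and for orthonormal k-tuples (f₁,...,f_k) let F(f₁,...,f_k) be the k×k symmetric matrix with entries B(f_i, f_j). Suppose the min-max values λ_k := inf over k-dimensional subspaces of sup of B over unit vectors are attained by orthonormal eigenvectors. Then λ_k = min over orthonormal k-tuples (f₁,...,f_k) of the largest eigenvalue of F(f₁,...,f_k). -/
/-!
For an orthonormal tuple `f`, the quadratic form `c ↦ ∑ᵢⱼ cᵢ B(fᵢ, fⱼ) cⱼ` on the unit sphere of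
`ℝᵏ⁺¹` takes exactly the values of `B v v` at unit vectors `v ∈ span f`. Hence the top eigenvalue of
the Gram matrix is the Rayleigh supremum over a `(k+1)`-dimensional subspace, which is at least
`λ_k` by the min-max characterisation. Conversely, for `f = (φ₀, …, φ_k)` the Gram matrix is
`diag(λ₀, …, λ_k)`, whose top eigenvalue is `λ_k` because the min-max values are nondecreasing:
every `(k+2)`-dimensional subspace contains a `(k+1)`-dimensional one.
-/

open Module

theorem Orthonormal.finrank_span_range {H : Type*} [NormedAddCommGroup H]
    [InnerProductSpace ℝ H] {n : ℕ} {f : Fin n → H} (hf : Orthonormal ℝ f) :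
    finrank ℝ (Submodule.span ℝ (Set.range f)) = n := by
  simpa using finrank_span_eq_card hf.linearIndependent

theorem Submodule.exists_le_finrank_eq {K V : Type*} [DivisionRing K] [AddCommGroup V]
    [Module K V] (S : Submodule K V) [FiniteDimensional K S] {n : ℕ} (hn : n ≤ finrank K S) :
    ∃ T ≤ S, finrank K T = n := by
  let b := Module.finBasis K S
  let v : Fin n → V := fun i => b (Fin.castLE hn i)
  have hv : LinearIndependent K v :=
    (b.linearIndependent.comp _ (Fin.castLE_injective hn)).map' S.subtype S.ker_subtype
  refine ⟨Submodule.span K (Set.range v), Submodule.span_le.mpr ?_,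
    by simpa using finrank_span_eq_card hv⟩
  rintro _ ⟨i, rfl⟩
  exact (b _).2

namespace LinearMap.BilinForm

theorem apply_sum_smul_sum_smul {R M ι : Type*} [CommSemiring R] [AddCommMonoid M] [Module R M]
    [Fintype ι] (B : LinearMap.BilinForm R M) (f : ι → M) (c : ι → R) :
    B (∑ i, c i • f i) (∑ j, c j • f j) = ∑ i, ∑ j, c i * B (f i) (f j) * c j := by
  simp only [map_sum, map_smul, LinearMap.sum_apply, LinearMap.smul_apply, smul_eq_mul,
    Finset.mul_sum]
  rw [Finset.sum_comm]
  exact Finset.sum_congr rfl fun i _ => Finset.sum_congr rfl fun j _ => by ring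

theorem isGreatest_gramValues_of_diagonal {M : Type*} [AddCommMonoid M] [Module ℝ M]
    (B : LinearMap.BilinForm ℝ M) {n : ℕ} (f : Fin (n + 1) → M) {w : Fin (n + 1) → ℝ}
    (hdiag : ∀ i j, B (f i) (f j) = if i = j then w i else 0)
    (hw : ∀ i, w i ≤ w (Fin.last n)) :
    IsGreatest {y | ∃ c : Fin (n + 1) → ℝ, ∑ i, c i ^ 2 = 1 ∧
      y = ∑ i, ∑ j, c i * B (f i) (f j) * c j} (w (Fin.last n)) := by
  have hdiagSum : ∀ c : Fin (n + 1) → ℝ,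
      ∑ i, ∑ j, c i * B (f i) (f j) * c j = ∑ i, w i * c i ^ 2 := fun c => by
    simp only [hdiag, mul_ite, ite_mul, mul_zero, zero_mul, Finset.sum_ite_eq,
      Finset.mem_univ, if_true]
    exact Finset.sum_congr rfl fun i _ => by ring
  refine ⟨⟨Pi.single (Fin.last n) 1, by simp [Pi.single_apply],
    by simp [Pi.single_apply, hdiag]⟩, ?_⟩
  rintro y ⟨c, hc, rfl⟩
  calc ∑ i, ∑ j, c i * B (f i) (f j) * c j = ∑ i, w i * c i ^ 2 := hdiagSum c
    _ ≤ ∑ i, w (Fin.last n) * c i ^ 2 :=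
      Finset.sum_le_sum fun i _ => mul_le_mul_of_nonneg_right (hw i) (sq_nonneg _)
    _ = w (Fin.last n) := by rw [← Finset.mul_sum, hc, mul_one]

variable {H : Type*} [NormedAddCommGroup H] [InnerProductSpace ℝ H]

def rayleighValues (B : LinearMap.BilinForm ℝ H) (S : Submodule ℝ H) : Set ℝ :=
  {y | ∃ v ∈ S, ‖v‖ = 1 ∧ y = B v v}

variable (B : LinearMap.BilinForm ℝ H) {S T : Submodule ℝ H}

theorem rayleighValues_nonempty (hS : S ≠ ⊥) : (B.rayleighValues S).Nonempty := by
  obtain ⟨v, hv, hv0⟩ := Submodule.exists_mem_ne_zero_of_ne_bot hS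
  exact ⟨_, ‖v‖⁻¹ • v, S.smul_mem _ hv, norm_smul_inv_norm hv0, rfl⟩

theorem rayleighValues_bddAbove [FiniteDimensional ℝ S] : BddAbove (B.rayleighValues S) := by
  -- `B` need not be continuous on `H`, but its restriction to a finite-dimensional `S` is.
  have hcont : Continuous fun v : S => B v v :=
    (B.restrict S).toContinuousBilinearMap.continuous₂.comp (continuous_id.prodMk continuous_id)
  have himage : B.rayleighValues S = (fun v : S => B v v) '' Metric.sphere 0 1 := by
    ext y
    constructor
    · rintro ⟨v, hv, hv1, rfl⟩
      exact ⟨⟨v, hv⟩, by simpa using hv1, rfl⟩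
    · rintro ⟨v, hv1, rfl⟩
      exact ⟨v, v.2, by simpa using hv1, rfl⟩
  rw [himage]
  exact (isCompact_sphere 0 1).bddAbove_image hcont.continuousOn

theorem csSup_rayleighValues_mono [FiniteDimensional ℝ S] (hTS : T ≤ S) (hT : T ≠ ⊥) :
    sSup (B.rayleighValues T) ≤ sSup (B.rayleighValues S) :=
  csSup_le_csSup B.rayleighValues_bddAbove (B.rayleighValues_nonempty hT)
    fun _ ⟨v, hv, hv1, hy⟩ => ⟨v, hTS hv, hv1, hy⟩

theorem gramValues_eq_rayleighValues_span {n : ℕ} {f : Fin n → H} (hf : Orthonormal ℝ f) :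
    {y | ∃ c : Fin n → ℝ, ∑ i, c i ^ 2 = 1 ∧ y = ∑ i, ∑ j, c i * B (f i) (f j) * c j} =
      B.rayleighValues (Submodule.span ℝ (Set.range f)) := by
  have hnorm : ∀ c : Fin n → ℝ, ‖∑ i, c i • f i‖ = 1 ↔ ∑ i, c i ^ 2 = 1 := fun c => by
    rw [← pow_eq_one_iff_of_nonneg (norm_nonneg _) two_ne_zero, ← real_inner_self_eq_norm_sq,
      hf.inner_sum]
    simp [sq]
  ext y
  simp only [rayleighValues, Set.mem_ofPred_eq, Submodule.mem_span_range_iff_exists_fun]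
  constructor
  · rintro ⟨c, hc, rfl⟩
    exact ⟨_, ⟨c, rfl⟩, (hnorm c).2 hc, (B.apply_sum_smul_sum_smul f c).symm⟩
  · rintro ⟨_, ⟨c, rfl⟩, hc, rfl⟩
    exact ⟨c, (hnorm c).1 hc, B.apply_sum_smul_sum_smul f c⟩

def minmaxValues (B : LinearMap.BilinForm ℝ H) (n : ℕ) : Set ℝ :=
  {x | ∃ S : Submodule ℝ H, finrank ℝ S = n ∧ x = sSup (B.rayleighValues S)}

theorem minmaxValues_bddBelow (hB : ∀ v, 0 ≤ B v v) (n : ℕ) : BddBelow (B.minmaxValues n) :=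
  ⟨0, fun _ ⟨_, _, hx⟩ => hx ▸ Real.sSup_nonneg fun _ ⟨v, _, _, hy⟩ => hy ▸ hB v⟩

theorem minmaxValues_nonempty {φ : ℕ → H} (hφ : Orthonormal ℝ φ) (n : ℕ) :
    (B.minmaxValues n).Nonempty :=
  ⟨_, _, (hφ.comp (Fin.val : Fin n → ℕ) Fin.val_injective).finrank_span_range, rfl⟩

theorem csInf_minmaxValues_le_succ {n : ℕ} (hn : 0 < n)
    (hbdd : BddBelow (B.minmaxValues n)) (hne : (B.minmaxValues (n + 1)).Nonempty) :
    sInf (B.minmaxValues n) ≤ sInf (B.minmaxValues (n + 1)) := by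
  refine le_csInf hne ?_
  rintro _ ⟨S, hS, rfl⟩
  have : FiniteDimensional ℝ S := Module.finite_of_finrank_pos (by omega)
  obtain ⟨T, hTS, hT⟩ := S.exists_le_finrank_eq (n := n) (by omega)
  have : FiniteDimensional ℝ T := Module.finite_of_finrank_pos (by omega)
  calc sInf (B.minmaxValues n) ≤ sSup (B.rayleighValues T) := csInf_le hbdd ⟨T, hT, rfl⟩
    _ ≤ sSup (B.rayleighValues S) :=
      B.csSup_rayleighValues_mono hTS (Submodule.one_le_finrank_iff.mp (by omega))

end LinearMap.BilinForm

theorem stmt_16_general {H : Type*} [NormedAddCommGroup H] [InnerProductSpace ℝ H]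
    (B : LinearMap.BilinForm ℝ H)
    (hBpsd : ∀ v, 0 ≤ B v v)
    (lam : ℕ → ℝ) (φ : ℕ → H) (hφ : Orthonormal ℝ φ)
    (hBφ : ∀ i j, B (φ i) (φ j) = if i = j then lam i else 0)
    (hminmax : ∀ k : ℕ, lam k = sInf {x : ℝ | ∃ S : Submodule ℝ H,
        Module.finrank ℝ S = k + 1 ∧
        x = sSup {y : ℝ | ∃ v ∈ S, ‖v‖ = 1 ∧ y = B v v}})
    (k : ℕ) :
    IsLeast {x : ℝ | ∃ f : Fin (k + 1) → H, Orthonormal ℝ f ∧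
        x = sSup {y : ℝ | ∃ c : Fin (k + 1) → ℝ, (∑ i, c i ^ 2 = 1) ∧
          y = ∑ i, ∑ j, c i * B (f i) (f j) * c j}}
      (lam k) := by
  have hlam : ∀ m, lam m = sInf (B.minmaxValues (m + 1)) := hminmax
  have hbdd := B.minmaxValues_bddBelow hBpsd
  have hmono : Monotone lam := monotone_nat_of_le_succ fun m => by
    rw [hlam, hlam]
    exact B.csInf_minmaxValues_le_succ m.succ_pos (hbdd _) (B.minmaxValues_nonempty hφ _)
  refine ⟨⟨fun i => φ i, hφ.comp _ Fin.val_injective, ?_⟩, ?_⟩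
  · exact (B.isGreatest_gramValues_of_diagonal _ (fun i j => by simp [hBφ, Fin.val_inj])
      fun i => hmono i.is_le).csSup_eq.symm
  · rintro _ ⟨f, hf, rfl⟩
    rw [hlam, B.gramValues_eq_rayleighValues_span hf]
    exact csInf_le (hbdd _) ⟨_, hf.finrank_span_range, rfl⟩

/-- Equivalent variational formulation (2.18): if the min-max values `λ_k` of a positive
semidefinite symmetric bilinear form `B` are attained by orthonormal eigenvectors
`(φ_i)` with `B(φ_i,φ_j) = λ_i δ_{ij}`, then `λ_k` is the minimum over orthonormal
`k`-tuples `(f₁,...,f_k)` of the largest eigenvalue of the Gram matrix `B(f_i,f_j)`. -/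
theorem stmt_16 {H : Type*} [NormedAddCommGroup H] [InnerProductSpace ℝ H] [CompleteSpace H]
    (B : LinearMap.BilinForm ℝ H) (hBsymm : ∀ u v, B u v = B v u)
    (hBpsd : ∀ v, 0 ≤ B v v)
    (lam : ℕ → ℝ) (φ : ℕ → H) (hφ : Orthonormal ℝ φ)
    (hBφ : ∀ i j, B (φ i) (φ j) = if i = j then lam i else 0)
    (hminmax : ∀ k : ℕ, lam k = sInf {x : ℝ | ∃ S : Submodule ℝ H,
        Module.finrank ℝ S = k + 1 ∧
        x = sSup {y : ℝ | ∃ v ∈ S, ‖v‖ = 1 ∧ y = B v v}})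
    (k : ℕ) :
    IsLeast {x : ℝ | ∃ f : Fin (k + 1) → H, Orthonormal ℝ f ∧
        x = sSup {y : ℝ | ∃ c : Fin (k + 1) → ℝ, (∑ i, c i ^ 2 = 1) ∧
          y = ∑ i, ∑ j, c i * B (f i) (f j) * c j}}
      (lam k) :=
  stmt_16_general B hBpsd lam φ hφ hBφ hminmax k
end
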